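/- arXiv:1906.09949 — 2 statements merged into one kernel-verified Lean document; each statement's English description precedes it below -/
import Mathlib

section
/- For every ε > 0 there exists q₀ > 0 such that for all 0 < q < q₀ and all 0 < π < q^{2+ε}, setting L = ⌊q^{−1−ε/3}⌋, the ν⊗μ-probability that the box [0,L)² is good is at least 1 − 2q^{ε/3}. -/
/-!
Split the complement of the good event into three bad events: some site of the box is immune,
some row has no infection coin, some column has no infection coin. By the union bound the first
has probability at most `L²π ≤ q^(-2-2ε/3) q^(2+ε) = q^(ε/3)`. By independence a fixed row fails
with probability `(1-q)^L ≤ e · exp(-q^(-ε/3))`, which beats any power of `q`, so the `2L` rows and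
columns together also contribute at most `q^(ε/3)` once `q` is small.
-/

open MeasureTheory ProbabilityTheory

/-- Sites of the two-dimensional lattice. -/
abbrev Site : Type := ℤ × ℤ

/-- A joint state assigns to each site a pair of Booleans:
the first component is `true` iff the site is susceptible (environment, law ν),
the second component is the infection coin, `true` iff the coin says infected (law μ). -/
abbrev EnvCfg : Type := Site → Bool × Bool

/-- A site is susceptible. -/
def Susc (s : EnvCfg) (x : Site) : Prop := (s x).1 = true

/-- A site is infected: it is susceptible and its infection coin is `true`. -/
def Infct (s : EnvCfg) (x : Site) : Prop := (s x).1 = true ∧ (s x).2 = true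

/-- The box at coarse-grained site `v`: `L·v + [0,L)²`. -/
def box (L : ℕ) (v : Site) : Set Site :=
  {y | (L : ℤ) * v.1 ≤ y.1 ∧ y.1 < (L : ℤ) * v.1 + L ∧
       (L : ℤ) * v.2 ≤ y.2 ∧ y.2 < (L : ℤ) * v.2 + L}

/-- A box is good: all its sites are susceptible and each of its `L` rows and each of its
`L` columns contains at least one infected site. -/
def GoodBox (L : ℕ) (s : EnvCfg) (v : Site) : Prop :=
  (∀ y ∈ box L v, Susc s y) ∧
  (∀ j < L, ∃ i < L, Infct s ((L : ℤ) * v.1 + i, (L : ℤ) * v.2 + j)) ∧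
  (∀ i < L, ∃ j < L, Infct s ((L : ℤ) * v.1 + i, (L : ℤ) * v.2 + j))



open Filter Topology Finset

section Asymptotics

open Real

lemma one_sub_pow_le_exp_neg_mul {q : ℝ} (hq1 : q ≤ 1) (n : ℕ) :
    (1 - q) ^ n ≤ exp (-(q * n)) :=
  calc (1 - q) ^ n ≤ exp (-q) ^ n := pow_le_pow_left₀ (by linarith) (one_sub_le_exp_neg q) n
    _ = exp (-(q * n)) := by rw [← exp_nat_mul]; ring_nf

lemma floor_mul_one_sub_pow_floor_le {q a : ℝ} (hq0 : 0 ≤ q) (hq1 : q ≤ 1) (ha : 0 ≤ a) :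
    ⌊a⌋₊ * (1 - q) ^ ⌊a⌋₊ ≤ exp 1 * a * exp (-(q * a)) := by
  have hfloor : a - 1 < ⌊a⌋₊ := Nat.sub_one_lt_floor a
  calc (⌊a⌋₊ : ℝ) * (1 - q) ^ ⌊a⌋₊ ≤ a * exp (-(q * ⌊a⌋₊)) :=
        mul_le_mul (Nat.floor_le ha) (one_sub_pow_le_exp_neg_mul hq1 _)
          (pow_nonneg (by linarith) _) ha
    _ ≤ a * exp (1 - q * a) := by gcongr; nlinarith
    _ = exp 1 * a * exp (-(q * a)) := by rw [sub_eq_add_neg, exp_add]; ring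

lemma eventually_two_mul_floor_mul_one_sub_pow_le {δ : ℝ} (hδ : 0 < δ) :
    ∀ᶠ q in 𝓝[>] 0, 2 * (⌊q ^ (-(1 + δ))⌋₊ : ℝ) * (1 - q) ^ ⌊q ^ (-(1 + δ))⌋₊ ≤ q ^ δ := by
  have hlarge : ∀ᶠ t in atTop, 2 * exp 1 * t ^ (1 / δ + 2) ≤ exp t :=
    ((tendsto_exp_div_rpow_atTop _).eventually_ge_atTop (2 * exp 1)).and (eventually_gt_atTop 0)
      |>.mono fun t ⟨h, ht⟩ => (le_div_iff₀ (by positivity)).mp h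
  filter_upwards [(tendsto_rpow_neg_nhdsGT_zero (neg_neg_of_pos hδ)).eventually hlarge,
    Ioo_mem_nhdsGT one_pos] with q hq ⟨hq0, hq1⟩
  have hqa : q * q ^ (-(1 + δ)) = q ^ (-δ) := by
    rw [← rpow_one_add' hq0.le (by linarith)]; ring_nf
  have hat : q ^ (-(1 + δ)) = q ^ δ * (q ^ (-δ)) ^ (1 / δ + 2) := by
    rw [← rpow_mul hq0.le, ← rpow_add hq0]; congr 1; field_simp; ring
  calc 2 * (⌊q ^ (-(1 + δ))⌋₊ : ℝ) * (1 - q) ^ ⌊q ^ (-(1 + δ))⌋₊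
      ≤ 2 * (exp 1 * q ^ (-(1 + δ)) * exp (-(q * q ^ (-(1 + δ))))) := by
        rw [mul_assoc]
        exact mul_le_mul_of_nonneg_left
          (floor_mul_one_sub_pow_floor_le hq0.le hq1.le (by positivity)) two_pos.le
    _ = q ^ δ * (2 * exp 1 * (q ^ (-δ)) ^ (1 / δ + 2)) / exp (q ^ (-δ)) := by
        rw [hqa, exp_neg]; nth_rw 1 [hat]; ring
    _ ≤ q ^ δ := by
        rw [div_le_iff₀ (exp_pos _)]
        exact mul_le_mul_of_nonneg_left hq (by positivity)

end Asymptotics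

lemma floor_rpow_mul_floor_rpow_mul_le {q ε π : ℝ} (hq : 0 < q) (hπ : π ≤ q ^ (2 + ε)) :
    (⌊q ^ (-(1 + ε / 3))⌋₊ : ℝ) * ⌊q ^ (-(1 + ε / 3))⌋₊ * π ≤ q ^ (ε / 3) := by
  have ha := Nat.floor_le (Real.rpow_nonneg hq.le (-(1 + ε / 3)))
  calc (⌊q ^ (-(1 + ε / 3))⌋₊ : ℝ) * ⌊q ^ (-(1 + ε / 3))⌋₊ * π
      ≤ ⌊q ^ (-(1 + ε / 3))⌋₊ * ⌊q ^ (-(1 + ε / 3))⌋₊ * q ^ (2 + ε) := by gcongr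
    _ ≤ q ^ (-(1 + ε / 3)) * q ^ (-(1 + ε / 3)) * q ^ (2 + ε) := by gcongr
    _ = q ^ (ε / 3) := by rw [← Real.rpow_add hq, ← Real.rpow_add hq]; ring_nf

lemma measureReal_biUnion_finset_le_card_mul {α ι : Type*} [MeasurableSpace α] {μ : Measure α}
    {A : ι → Set α} {c : ℝ} (s : Finset ι) (h : ∀ i ∈ s, μ.real (A i) ≤ c) :
    μ.real (⋃ i ∈ s, A i) ≤ #s * c :=
  (measureReal_biUnion_finset_le s A).trans <| by
    simpa using Finset.sum_le_card_nsmul s _ c h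

lemma ProbabilityTheory.iIndepFun.measureReal_forall_mem_eq_pow {Ω ι β : Type*} [MeasurableSpace Ω]
    [MeasurableSpace β] {P : Measure Ω} {X : ι → Ω → β} (hX : iIndepFun X P) {S : Set β}
    (hS : MeasurableSet S) {p : ℝ} (hp : ∀ i, P.real (X i ⁻¹' S) = p) (T : Finset ι) :
    P.real {ω | ∀ i ∈ T, X i ω ∈ S} = p ^ #T := by
  have hinter : {ω | ∀ i ∈ T, X i ω ∈ S} = ⋂ i ∈ T, X i ⁻¹' S := by ext; simp
  rw [hinter, measureReal_def, hX.meas_biInter fun i _ => ⟨S, hS, rfl⟩, ENNReal.toReal_prod]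
  exact (prod_congr rfl fun i _ => hp i).trans (prod_const p)

lemma goodBox_zero_or (L : ℕ) (s : EnvCfg) :
    GoodBox L s (0, 0) ∨ (∃ i < L, ∃ j < L, (s ((i : ℤ), (j : ℤ))).1 = false) ∨
      (∃ j < L, ∀ i < L, (s ((i : ℤ), (j : ℤ))).2 = false) ∨
      (∃ i < L, ∀ j < L, (s ((i : ℤ), (j : ℤ))).2 = false) := by
  by_contra! h
  simp only [ne_eq, Bool.not_eq_false] at h
  obtain ⟨hbad, hsusc, hrow, hcol⟩ := h
  refine hbad ⟨?_, fun j hj => ?_, fun i hi => ?_⟩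
  · rintro ⟨a, b⟩ ⟨ha0, haL, hb0, hbL⟩
    simp only [mul_zero, zero_add] at ha0 haL hb0 hbL
    lift a to ℕ using ha0
    lift b to ℕ using hb0
    simpa [Susc] using hsusc a (by omega) b (by omega)
  · obtain ⟨i, hi, hcoin⟩ := hrow j hj
    exact ⟨i, hi, by simpa [Infct] using ⟨hsusc i hi j hj, hcoin⟩⟩
  · obtain ⟨j, hj, hcoin⟩ := hcol i hi
    exact ⟨j, hj, by simpa [Infct] using ⟨hsusc i hi j hj, hcoin⟩⟩

section Model

variable {P : Measure EnvCfg} {π q : ℝ}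

lemma measureReal_coins_false_eq [IsProbabilityMeasure P]
    (hInd : iIndepFun (β := fun _ : Site ⊕ Site => Bool)
      (fun i s => Sum.elim (fun x => (s x).1) (fun x => (s x).2) i) P)
    (hCoin : ∀ x : Site, P.real {s | (s x).2 = true} = q) {f : ℕ → Site} (hf : f.Injective)
    (L : ℕ) : P.real {s | ∀ i ∈ range L, (s (f i)).2 = false} = (1 - q) ^ L := by
  have hfalse : ∀ x, P.real {s : EnvCfg | (s x).2 = false} = 1 - q := fun x => by
    have hmeas : MeasurableSet {s : EnvCfg | (s x).2 = true} :=
      (measurable_pi_apply x).snd (measurableSet_singleton true)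
    rw [← hCoin x, ← probReal_compl_eq_one_sub hmeas]
    congr 1; ext; simp
  simpa using (hInd.precomp (Sum.inr_injective.comp hf)).measureReal_forall_mem_eq_pow
    (measurableSet_singleton false) (fun i => hfalse (f i)) (range L)

theorem one_sub_le_measureReal_goodBox [IsProbabilityMeasure P]
    (hInd : iIndepFun (β := fun _ : Site ⊕ Site => Bool)
      (fun i s => Sum.elim (fun x => (s x).1) (fun x => (s x).2) i) P)
    (hEnv : ∀ x : Site, P.real {s | (s x).1 = false} = π)
    (hCoin : ∀ x : Site, P.real {s | (s x).2 = true} = q) (L : ℕ) :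
    1 - (L * L * π + 2 * L * (1 - q) ^ L) ≤ P.real {s | GoodBox L s (0, 0)} := by
  set Immune := ⋃ i ∈ range L, ⋃ j ∈ range L, {s : EnvCfg | (s ((i : ℤ), (j : ℤ))).1 = false}
  set RowFail := ⋃ j ∈ range L, {s : EnvCfg | ∀ i ∈ range L, (s ((i : ℤ), (j : ℤ))).2 = false}
  set ColFail := ⋃ i ∈ range L, {s : EnvCfg | ∀ j ∈ range L, (s ((i : ℤ), (j : ℤ))).2 = false}
  have hcover : Set.univ ⊆ {s | GoodBox L s (0, 0)} ∪ (Immune ∪ (RowFail ∪ ColFail)) :=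
    fun s _ => by simpa [Immune, RowFail, ColFail] using goodBox_zero_or L s
  have hImmune : P.real Immune ≤ L * (L * π) := by
    refine (measureReal_biUnion_finset_le_card_mul _ fun i _ => ?_).trans_eq (by rw [card_range])
    exact (measureReal_biUnion_finset_le_card_mul _ fun j _ => (hEnv _).le).trans_eq
      (by rw [card_range])
  have hRow : P.real RowFail ≤ L * (1 - q) ^ L := by
    refine (measureReal_biUnion_finset_le_card_mul _ fun j _ => ?_).trans_eq (by rw [card_range])
    exact (measureReal_coins_false_eq hInd hCoin (f := fun i : ℕ => ((i : ℤ), (j : ℤ)))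
      (fun _ _ h => by simpa using h) L).le
  have hCol : P.real ColFail ≤ L * (1 - q) ^ L := by
    refine (measureReal_biUnion_finset_le_card_mul _ fun i _ => ?_).trans_eq (by rw [card_range])
    exact (measureReal_coins_false_eq hInd hCoin (f := fun j : ℕ => ((i : ℤ), (j : ℤ)))
      (fun _ _ h => by simpa using h) L).le
  have hunion := (measureReal_mono (μ := P) hcover).trans ((measureReal_union_le _ _).trans
    (add_le_add_right ((measureReal_union_le _ _).trans
      (add_le_add_right (measureReal_union_le _ _) _)) _))
  rw [probReal_univ] at hunion
  linarith

end Model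

/-- The joint law ν⊗μ: all the coordinates (environment and coin, over all sites) are
independent, each environment coordinate is immune (not susceptible) with probability π,
and each coin is `true` with probability `q`. -/
theorem goodBox_prob (ε : ℝ) (hε : 0 < ε) :
    ∃ q₀ : ℝ, 0 < q₀ ∧ ∀ q : ℝ, 0 < q → q < q₀ → ∀ π : ℝ, 0 < π → π < q ^ (2 + ε) →
    ∀ P : Measure EnvCfg, IsProbabilityMeasure P →
    iIndepFun (β := fun _ : Site ⊕ Site => Bool)
      (fun i s => Sum.elim (fun x => (s x).1) (fun x => (s x).2) i) P →
    (∀ x : Site, (P {s | (s x).1 = false}).toReal = π) →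
    (∀ x : Site, (P {s | (s x).2 = true}).toReal = q) →
    1 - 2 * q ^ (ε / 3) ≤ (P {s | GoodBox (⌊q ^ (-(1 + ε / 3))⌋₊) s (0, 0)}).toReal := by
  obtain ⟨q₀, hq₀, hsmall⟩ := (nhdsGT_basis 0).eventually_iff.mp
    (eventually_two_mul_floor_mul_one_sub_pow_le (div_pos hε three_pos))
  refine ⟨q₀, hq₀, fun q hq hqq₀ π _ hπ P _ hInd hEnv hCoin => ?_⟩
  have hImmune := floor_rpow_mul_floor_rpow_mul_le hq hπ.le
  have hLines := hsmall ⟨hq, hqq₀⟩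
  have hGood := one_sub_le_measureReal_goodBox hInd hEnv hCoin ⌊q ^ (-(1 + ε / 3))⌋₊
  exact le_trans (by linarith) hGood
end

section
/- For every ε > 0 there exists q₀ > 0 such that for all 0 < q < q₀ and all 0 < π < q^{2+ε}, setting L = ⌊q^{−1−ε/3}⌋, the ν⊗μ-probability that the box containing the origin belongs to an infinite connected cluster of good boxes (where boxes at coarse-grained sites x̂, ŷ are adjacent when x̂ and ŷ are nearest neighbours in ℤ²) is at least 1 − 16q^{ε/3}. -/
open MeasureTheory ProbabilityTheory

/-- Nearest-neighbour adjacency in ℤ². -/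
def SiteAdj (a b : Site) : Prop :=
  (a.1 = b.1 ∧ (a.2 = b.2 + 1 ∨ a.2 + 1 = b.2)) ∨
  (a.2 = b.2 ∧ (a.1 = b.1 + 1 ∨ a.1 + 1 = b.1))

/-- `a` and `b` are connected within the set `C` by a nearest-neighbour path. -/
def ConnIn (C : Set Site) (a b : Site) : Prop :=
  ∃ n : ℕ, ∃ p : ℕ → Site, p 0 = a ∧ p n = b ∧ (∀ i ≤ n, p i ∈ C) ∧
    ∀ i < n, SiteAdj (p i) (p (i + 1))

/-- The box containing the origin belongs to an infinite connected cluster of good boxes. -/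
def OriginInInfiniteGoodCluster (L : ℕ) (s : EnvCfg) : Prop :=
  ∃ C : Set Site, ((0, 0) : Site) ∈ C ∧ C.Infinite ∧ (∀ v ∈ C, GoodBox L s v) ∧
    ∀ a ∈ C, ∀ b ∈ C, ConnIn C a b

/-!
Renormalise by `3 × 3` blocks of boxes. A box is bad with probability at most
`b = L²π + 2L(1-q)^L`, which is `≤ 2q^{ε/3}` for the chosen `L`. A block of level `m + 1` is
good when at most one of its nine level-`m` sub-blocks is bad; distinct sub-blocks occupy
disjoint boxes, so the probability `p_m` that a level-`m` block is bad satisfies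
`p_{m+1} ≤ 72 p_m²`, whence `p_m ≤ b 2^{-m}` once `144 b ≤ 1`, and the origin is good at every
level with probability at least `1 - 2b`.

Deterministically, a good block of level `m` contains a connected set of good boxes whose trace
on each side of the block is triadically dense (it meets two of the three thirds, recursively).
Two such traces on a common side intersect, so the sets of the good sub-blocks, which form a
connected subset of the `3 × 3` grid, glue together. Following the lower-left corners, the cluster
of the origin reaches the row `3 ^ m - 1` for every `m`, hence is infinite.
-/

namespace SiteAdj

lemma symm {a b : Site} (h : SiteAdj a b) : SiteAdj b a := by
  unfold SiteAdj at *; omega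

instance : DecidableRel SiteAdj := fun a b => by unfold SiteAdj; infer_instance

end SiteAdj

namespace ConnIn

variable {C D : Set Site} {a b c : Site}

lemma refl (ha : a ∈ C) : ConnIn C a a :=
  ⟨0, fun _ => a, rfl, rfl, fun _ _ => ha, fun _ h => absurd h (Nat.not_lt_zero _)⟩

lemma single (ha : a ∈ C) (hb : b ∈ C) (h : SiteAdj a b) : ConnIn C a b := by
  refine ⟨1, fun i => if i = 0 then a else b, rfl, rfl, fun i _ => ?_, fun i hi => ?_⟩
  · dsimp only
    split <;> assumption
  · obtain rfl : i = 0 := by omega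
    simpa using h

lemma mono (hCD : C ⊆ D) : ConnIn C a b → ConnIn D a b
  | ⟨n, p, h0, hn, hmem, hadj⟩ => ⟨n, p, h0, hn, fun i hi => hCD (hmem i hi), hadj⟩

lemma mem_right : ConnIn C a b → b ∈ C
  | ⟨n, _, _, hn, hmem, _⟩ => hn ▸ hmem n le_rfl

lemma of_mem_cluster (h : ConnIn C a b) : ConnIn {w | ConnIn C a w} a b := by
  obtain ⟨n, p, h0, hn, hmem, hadj⟩ := h
  exact ⟨n, p, h0, hn, fun i hi => ⟨i, p, h0, rfl, fun j hj => hmem j (hj.trans hi),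
    fun j hj => hadj j (hj.trans_le hi)⟩, hadj⟩

lemma symm : ConnIn C a b → ConnIn C b a
  | ⟨n, p, h0, hn, hmem, hadj⟩ => by
    refine ⟨n, fun i => p (n - i), by simpa, by simpa, fun i _ => hmem _ (Nat.sub_le n i),
      fun i hi => ?_⟩
    have h := hadj (n - (i + 1)) (by omega)
    rw [show n - (i + 1) + 1 = n - i by omega] at h
    exact h.symm

lemma trans : ConnIn C a b → ConnIn C b c → ConnIn C a c
  | ⟨n, p, hp0, hpn, hpmem, hpadj⟩, ⟨k, r, hr0, hrk, hrmem, hradj⟩ => by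
    refine ⟨n + k, fun i => if i ≤ n then p i else r (i - n), by simpa, ?_, fun i _ => ?_,
      fun i hi => ?_⟩
    · rcases Nat.eq_zero_or_pos k with rfl | hk
      · simp [hpn, ← hr0, hrk]
      · simp [show ¬ n + k ≤ n by omega, hrk]
    · dsimp only
      split
      · exact hpmem i ‹_›
      · exact hrmem (i - n) (by omega)
    · rcases lt_trichotomy i n with h | rfl | h
      · simpa [h.le, Nat.succ_le_of_lt h] using hpadj i h
      · simpa [hpn, ← hr0] using hradj 0 (by omega)
      · simpa [show ¬ i ≤ n by omega, show ¬ i + 1 ≤ n by omega,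
          show i + 1 - n = i - n + 1 by omega] using hradj (i - n) (by omega)

end ConnIn

lemma connIn_iUnion {ι : Type*} {r : ι → ι → Prop} {N : ι → Set Site}
    (hconn : ∀ i, ∀ x ∈ N i, ∀ y ∈ N i, ConnIn (N i) x y)
    (hlink : ∀ i j, r i j → ∃ x ∈ N i, ∃ y ∈ N j, SiteAdj x y)
    (hr : ∀ i j, Relation.ReflTransGen r i j) :
    ∀ x ∈ ⋃ i, N i, ∀ y ∈ ⋃ i, N i, ConnIn (⋃ i, N i) x y := by
  have hsub : ∀ i, N i ⊆ ⋃ i, N i := Set.subset_iUnion N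
  suffices key : ∀ i j, Relation.ReflTransGen r i j → ∀ x ∈ N i, ∀ y ∈ N j,
      ConnIn (⋃ i, N i) x y by
    simp only [Set.mem_iUnion]
    rintro x ⟨i, hx⟩ y ⟨j, hy⟩
    exact key i j (hr i j) x hx y hy
  intro i j hij
  induction hij with
  | refl => exact fun x hx y hy => (hconn i x hx y hy).mono (hsub i)
  | @tail j k _ hjk ih =>
    intro x hx y hy
    obtain ⟨w, hw, w', hw', hadj⟩ := hlink j k hjk
    exact ((ih x hx w hw).trans (.single (hsub j hw) (hsub k hw') hadj)).trans
      ((hconn k w' hw' y hy).mono (hsub k))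

/-- `TriadicDense m a S`: within the triadic interval `[a, a + 3 ^ m)`, the set `S` meets two of
the three thirds in a set that is again `TriadicDense`, down to single points. -/
def TriadicDense : ℕ → ℤ → Set ℤ → Prop
  | 0, a, S => a ∈ S
  | m + 1, a, S => ∃ i j : Fin 3, i ≠ j ∧
      TriadicDense m (a + i * 3 ^ m) S ∧ TriadicDense m (a + j * 3 ^ m) S

lemma exists_ne_and_of_subsingleton_not {p : Fin 3 → Prop} (h : {i | ¬p i}.Subsingleton) :
    ∃ i j : Fin 3, i ≠ j ∧ p i ∧ p j := by
  have hp : ∀ i j, i ≠ j → p i ∨ p j := fun i j hij => by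
    by_contra! hn
    exact hij (h hn.1 hn.2)
  by_cases h0 : p 0
  · rcases hp 1 2 (by decide) with h1 | h2
    exacts [⟨0, 1, by decide, h0, h1⟩, ⟨0, 2, by decide, h0, h2⟩]
  · exact ⟨1, 2, by decide, (hp 0 1 (by decide)).resolve_left h0,
      (hp 0 2 (by decide)).resolve_left h0⟩

namespace TriadicDense

lemma mono {m : ℕ} {a : ℤ} {S T : Set ℤ} (hST : S ⊆ T) (h : TriadicDense m a S) :
    TriadicDense m a T := by
  induction m generalizing a with
  | zero => exact hST h
  | succ m ih =>
    obtain ⟨i, j, hij, hi, hj⟩ := h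
    exact ⟨i, j, hij, ih hi, ih hj⟩

/-- Two pairs of distinct thirds share a third. -/
lemma exists_mem_inter {m : ℕ} {a : ℤ} {S T : Set ℤ} (hS : TriadicDense m a S)
    (hT : TriadicDense m a T) : ∃ x, x ∈ S ∧ x ∈ T := by
  induction m generalizing a with
  | zero => exact ⟨a, hS, hT⟩
  | succ m ih =>
    obtain ⟨i, j, hij, hi, hj⟩ := hS
    obtain ⟨k, l, hkl, hk, hl⟩ := hT
    have hfin : ∀ i j k l : Fin 3, i ≠ j → k ≠ l → i = k ∨ i = l ∨ j = k ∨ j = l := by decide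
    rcases hfin i j k l hij hkl with rfl | rfl | rfl | rfl
    exacts [ih hi hk, ih hi hl, ih hj hk, ih hj hl]

lemma nonempty {m : ℕ} {a : ℤ} {S : Set ℤ} (h : TriadicDense m a S) : S.Nonempty :=
  let ⟨x, hx, _⟩ := h.exists_mem_inter h
  ⟨x, hx⟩

lemma succ {m : ℕ} {a : ℤ} {S : Set ℤ} {p : Fin 3 → Prop} (hp : {i | ¬p i}.Subsingleton)
    (h : ∀ i, p i → TriadicDense m (a + i * 3 ^ m) S) : TriadicDense (m + 1) a S :=
  let ⟨i, j, hij, hi, hj⟩ := exists_ne_and_of_subsingleton_not hp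
  ⟨i, j, hij, h i hi, h j hj⟩

end TriadicDense

abbrev Cell : Type := Fin 3 × Fin 3

def Cell.toSite (a : Cell) : Site := (a.1, a.2)

def child (v : Site) (a : Cell) : Site := (3 * v.1 + a.1, 3 * v.2 + a.2)

lemma siteAdj_child_iff {v : Site} {a b : Cell} :
    SiteAdj (child v a) (child v b) ↔ SiteAdj a.toSite b.toSite := by
  simp only [SiteAdj, child, Cell.toSite]
  omega

lemma child_injective (v : Site) : (child v).Injective := fun a b h => by
  simp only [child, Prod.ext_iff, add_right_inj, Fin.ext_iff] at h ⊢
  omega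

lemma three_pow_mul_child_fst (m : ℕ) (v : Site) (a : Cell) :
    (3 : ℤ) ^ m * (child v a).1 = 3 ^ (m + 1) * v.1 + a.1 * 3 ^ m := by
  simp only [child]; ring

lemma three_pow_mul_child_snd (m : ℕ) (v : Site) (a : Cell) :
    (3 : ℤ) ^ m * (child v a).2 = 3 ^ (m + 1) * v.2 + a.2 * 3 ^ m := by
  simp only [child]; ring

def GoodCellAdj (good : Cell → Prop) (c d : {c // good c}) : Prop :=
  SiteAdj c.1.toSite d.1.toSite

namespace GoodCellAdj

variable {good : Cell → Prop}

lemma reflTransGen_mk {c d : Cell} (hc : good c) (hd : good d) (h : SiteAdj c.toSite d.toSite) :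
    Relation.ReflTransGen (GoodCellAdj good) ⟨c, hc⟩ ⟨d, hd⟩ :=
  .single h

/-- A corner reaches the centre through one of its two edge neighbours, which are not both bad. -/
lemma exists_hub_of_center (h : {c | ¬good c}.Subsingleton) (hcenter : good (1, 1)) :
    ∃ o, ∀ c, Relation.ReflTransGen (GoodCellAdj good) c o := by
  have corner {c p r : Cell} (hc : good c) (hpr : p ≠ r)
      (hadj : SiteAdj c.toSite p.toSite ∧ SiteAdj c.toSite r.toSite ∧
        SiteAdj p.toSite (1, 1) ∧ SiteAdj r.toSite (1, 1)) :
      Relation.ReflTransGen (GoodCellAdj good) ⟨c, hc⟩ ⟨(1, 1), hcenter⟩ := by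
    by_cases hp : good p
    · exact (reflTransGen_mk hc hp hadj.1).trans (reflTransGen_mk hp hcenter hadj.2.2.1)
    · have hr : good r := by_contra fun hr => hpr (h hp hr)
      exact (reflTransGen_mk hc hr hadj.2.1).trans (reflTransGen_mk hr hcenter hadj.2.2.2)
  refine ⟨⟨(1, 1), hcenter⟩, fun ⟨c, hc⟩ => ?_⟩
  fin_cases c
  · exact corner (p := (0, 1)) (r := (1, 0)) hc (by decide) (by decide)
  · exact reflTransGen_mk hc hcenter (by decide)
  · exact corner (p := (0, 1)) (r := (1, 2)) hc (by decide) (by decide)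
  · exact reflTransGen_mk hc hcenter (by decide)
  · exact .refl
  · exact reflTransGen_mk hc hcenter (by decide)
  · exact corner (p := (2, 1)) (r := (1, 0)) hc (by decide) (by decide)
  · exact reflTransGen_mk hc hcenter (by decide)
  · exact corner (p := (2, 1)) (r := (1, 2)) hc (by decide) (by decide)

/-- With the centre bad, the other eight cells are good and form a ring. -/
lemma exists_hub_of_not_center (h : {c | ¬good c}.Subsingleton) (hcenter : ¬good (1, 1)) :
    ∃ o, ∀ c, Relation.ReflTransGen (GoodCellAdj good) c o := by
  have hgood (c : Cell) (hc : c ≠ (1, 1)) : good c := by_contra fun hbad => hc (h hbad hcenter)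
  have ring {c d : Cell} (hc : c ≠ (1, 1) := by decide) (hd : d ≠ (1, 1) := by decide)
      (hcd : SiteAdj c.toSite d.toSite := by decide) :
      Relation.ReflTransGen (GoodCellAdj good) ⟨c, hgood c hc⟩ ⟨d, hgood d hd⟩ :=
    reflTransGen_mk _ _ hcd
  have h10 := ring (c := (1, 0)) (d := (0, 0))
  have h20 := (ring (c := (2, 0)) (d := (1, 0))).trans h10
  have h21 := (ring (c := (2, 1)) (d := (2, 0))).trans h20
  have h22 := (ring (c := (2, 2)) (d := (2, 1))).trans h21
  have h12 := (ring (c := (1, 2)) (d := (2, 2))).trans h22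
  have h02 := (ring (c := (0, 2)) (d := (1, 2))).trans h12
  have h01 := (ring (c := (0, 1)) (d := (0, 2))).trans h02
  refine ⟨⟨(0, 0), hgood _ (by decide)⟩, fun ⟨c, hc⟩ => ?_⟩
  fin_cases c
  exacts [.refl, h01, h02, h10, absurd hc hcenter, h12, h20, h21, h22]

lemma reflTransGen_of_subsingleton_not (h : {c | ¬good c}.Subsingleton) (a b : {c // good c}) :
    Relation.ReflTransGen (GoodCellAdj good) a b := by
  have : Std.Symm (GoodCellAdj good) := ⟨fun _ _ => SiteAdj.symm⟩
  obtain ⟨o, ho⟩ := (em (good (1, 1))).elim (exists_hub_of_center h) (exists_hub_of_not_center h)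
  exact (ho a).trans (Std.Symm.symm _ _ (ho b))

end GoodCellAdj

def BlockGood (G : Site → Prop) : ℕ → Site → Prop
  | 0, v => G v
  | m + 1, v => {a : Cell | ¬BlockGood G m (child v a)}.Subsingleton

def CornerChainGood (G : Site → Prop) : ℕ → Site → Prop
  | 0, v => G v
  | m + 1, v => BlockGood G (m + 1) v ∧ CornerChainGood G m (child v (0, 0))

lemma CornerChainGood.blockGood {G : Site → Prop} :
    ∀ {m : ℕ} {v : Site}, CornerChainGood G m v → BlockGood G m v
  | 0, _, h => h
  | _ + 1, _, h => h.1

/-- A connected set of `G`-sites in the block `3 ^ m • v + [0, 3 ^ m)²` whose traces on the four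
sides of the block are triadically dense; the traces of two neighbouring blocks therefore meet. -/
structure Spanning (G : Site → Prop) (m : ℕ) (v : Site) (N : Set Site) : Prop where
  good : ∀ w ∈ N, G w
  connIn : ∀ a ∈ N, ∀ b ∈ N, ConnIn N a b
  bottom : TriadicDense m (3 ^ m * v.1) {x | (x, 3 ^ m * v.2) ∈ N}
  top : TriadicDense m (3 ^ m * v.1) {x | (x, 3 ^ m * v.2 + 3 ^ m - 1) ∈ N}
  left : TriadicDense m (3 ^ m * v.2) {y | (3 ^ m * v.1, y) ∈ N}
  right : TriadicDense m (3 ^ m * v.2) {y | (3 ^ m * v.1 + 3 ^ m - 1, y) ∈ N}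

namespace Spanning

variable {G : Site → Prop} {m : ℕ}

lemma exists_adj_of_above {u : Site} {N N' : Set Site} (h : Spanning G m u N)
    (h' : Spanning G m (u.1, u.2 + 1) N') : ∃ w ∈ N, ∃ w' ∈ N', SiteAdj w w' := by
  obtain ⟨x, hx, hx'⟩ := h.top.exists_mem_inter h'.bottom
  exact ⟨_, hx, _, hx', Or.inl ⟨rfl, Or.inr (by simp only; ring)⟩⟩

lemma exists_adj_of_right {u : Site} {N N' : Set Site} (h : Spanning G m u N)
    (h' : Spanning G m (u.1 + 1, u.2) N') : ∃ w ∈ N, ∃ w' ∈ N', SiteAdj w w' := by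
  obtain ⟨y, hy, hy'⟩ := h.right.exists_mem_inter h'.left
  exact ⟨_, hy, _, hy', Or.inr ⟨rfl, Or.inr (by simp only; ring)⟩⟩

lemma exists_adj {u u' : Site} {N N' : Set Site} (h : Spanning G m u N)
    (h' : Spanning G m u' N') (hu : SiteAdj u u') : ∃ w ∈ N, ∃ w' ∈ N', SiteAdj w w' := by
  obtain ⟨u₁, u₂⟩ := u
  obtain ⟨u₁', u₂'⟩ := u'
  dsimp only [SiteAdj] at hu
  rcases hu with ⟨rfl, rfl | rfl⟩ | ⟨rfl, rfl | rfl⟩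
  · obtain ⟨w', hw', w, hw, hadj⟩ := h'.exists_adj_of_above h
    exact ⟨w, hw, w', hw', hadj.symm⟩
  · exact h.exists_adj_of_above h'
  · obtain ⟨w', hw', w, hw, hadj⟩ := h'.exists_adj_of_right h
    exact ⟨w, hw, w', hw', hadj.symm⟩
  · exact h.exists_adj_of_right h'

variable {v : Site}

lemma iUnion_children (hv : BlockGood G (m + 1) v)
    {N : {a // BlockGood G m (child v a)} → Set Site} (hN : ∀ c, Spanning G m (child v c.1) (N c)) :
    Spanning G (m + 1) v (⋃ c, N c) where
  good w hw := by
    obtain ⟨c, hc⟩ := Set.mem_iUnion.1 hw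
    exact (hN c).good w hc
  connIn := connIn_iUnion (fun c => (hN c).connIn)
    (fun c d hcd => (hN c).exists_adj (hN d) (siteAdj_child_iff.2 hcd))
    (GoodCellAdj.reflTransGen_of_subsingleton_not hv)
  bottom := .succ (p := fun i => BlockGood G m (child v (i, 0)))
    (hv.preimage (Prod.mk_left_injective _)) fun i hi => by
      have h := (hN ⟨_, hi⟩).bottom
      simp only [three_pow_mul_child_fst, three_pow_mul_child_snd] at h
      refine h.mono fun x hx => Set.mem_iUnion_of_mem ⟨_, hi⟩ ?_
      simpa using hx
  top := .succ (p := fun i => BlockGood G m (child v (i, 2)))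
    (hv.preimage (Prod.mk_left_injective _)) fun i hi => by
      have h := (hN ⟨_, hi⟩).top
      simp only [three_pow_mul_child_fst, three_pow_mul_child_snd] at h
      refine h.mono fun x hx => Set.mem_iUnion_of_mem ⟨_, hi⟩ ?_
      rw [Set.mem_ofPred_eq] at hx
      convert hx using 2
      simp only [Fin.isValue, Fin.val_two, Nat.cast_ofNat]
      ring
  left := .succ (p := fun j => BlockGood G m (child v (0, j)))
    (hv.preimage (Prod.mk_right_injective _)) fun j hj => by
      have h := (hN ⟨_, hj⟩).left
      simp only [three_pow_mul_child_fst, three_pow_mul_child_snd] at h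
      refine h.mono fun y hy => Set.mem_iUnion_of_mem ⟨_, hj⟩ ?_
      simpa using hy
  right := .succ (p := fun j => BlockGood G m (child v (2, j)))
    (hv.preimage (Prod.mk_right_injective _)) fun j hj => by
      have h := (hN ⟨_, hj⟩).right
      simp only [three_pow_mul_child_fst, three_pow_mul_child_snd] at h
      refine h.mono fun y hy => Set.mem_iUnion_of_mem ⟨_, hj⟩ ?_
      rw [Set.mem_ofPred_eq] at hy
      convert hy using 2
      simp only [Fin.isValue, Fin.val_two, Nat.cast_ofNat]
      ring

end Spanning

lemma exists_spanning {G : Site → Prop} (m : ℕ) (v : Site) (hv : BlockGood G m v) :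
    ∃ N, Spanning G m v N ∧ (CornerChainGood G m v → (3 ^ m * v.1, 3 ^ m * v.2) ∈ N) := by
  induction m generalizing v with
  | zero =>
    refine ⟨{v}, ⟨?_, ?_, ?_, ?_, ?_, ?_⟩, fun _ => by simp⟩
    all_goals simp_all [BlockGood, TriadicDense, ConnIn.refl]
  | succ m ih =>
    choose N hN hcorner using fun c : {a // BlockGood G m (child v a)} => ih _ c.2
    refine ⟨⋃ c, N c, .iUnion_children hv hN, fun ⟨_, hc⟩ => ?_⟩
    refine Set.mem_iUnion_of_mem ⟨(0, 0), hc.blockGood⟩ ?_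
    simpa [three_pow_mul_child_fst, three_pow_mul_child_snd] using hcorner ⟨(0, 0), hc.blockGood⟩ hc

lemma cornerChainGood_origin {G : Site → Prop} (hG : ∀ m, BlockGood G m (0, 0)) :
    ∀ m, CornerChainGood G m (0, 0)
  | 0 => hG 0
  | m + 1 => ⟨hG (m + 1), by simpa [child] using cornerChainGood_origin hG m⟩

/-- The cluster of the origin reaches the row `3 ^ m - 1` for every `m`. -/
lemma exists_infinite_cluster {G : Site → Prop} (hG : ∀ m, BlockGood G m (0, 0)) :
    ∃ C : Set Site, (0, 0) ∈ C ∧ C.Infinite ∧ (∀ v ∈ C, G v) ∧ ∀ a ∈ C, ∀ b ∈ C, ConnIn C a b := by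
  set C := {w | ConnIn {v | G v} (0, 0) w}
  have hfar (m : ℕ) : ∃ x, (x, 3 ^ m - 1) ∈ C := by
    obtain ⟨N, hN, hcorner⟩ := exists_spanning m (0, 0) (hG m)
    have h0 : ((0, 0) : Site) ∈ N := by simpa using hcorner (cornerChainGood_origin hG m)
    obtain ⟨x, hx⟩ := hN.top.nonempty
    exact ⟨x, (hN.connIn _ h0 _ (by simpa using hx)).mono hN.good⟩
  refine ⟨C, .refl (hG 0), ?_, fun v hv => ConnIn.mem_right hv,
    fun a ha b hb => ha.of_mem_cluster.symm.trans hb.of_mem_cluster⟩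
  refine Set.Infinite.of_image Prod.snd (Set.infinite_of_forall_exists_gt fun a => ?_)
  obtain ⟨m, hm⟩ := pow_unbounded_of_one_lt (a + 1) (by norm_num : (1 : ℤ) < 3)
  obtain ⟨x, hx⟩ := hfar m
  exact ⟨_, ⟨_, hx, rfl⟩, by simp only; omega⟩

def boxSite (L : ℕ) (v : Site) (i j : ℕ) : Site := ((L : ℤ) * v.1 + i, (L : ℤ) * v.2 + j)

lemma boxSite_mem_box {L : ℕ} {v : Site} {i j : ℕ} (hi : i < L) (hj : j < L) :
    boxSite L v i j ∈ box L v := by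
  simp only [boxSite, box, Set.mem_ofPred_eq]
  omega

lemma exists_boxSite_eq_of_mem_box {L : ℕ} {v y : Site} (hy : y ∈ box L v) :
    ∃ i < L, ∃ j < L, boxSite L v i j = y := by
  obtain ⟨h1, h2, h3, h4⟩ := hy
  refine ⟨(y.1 - L * v.1).toNat, by omega, (y.2 - L * v.2).toNat, by omega, Prod.ext ?_ ?_⟩ <;>
    simp only [boxSite] <;> omega

lemma boxSite_injective_left (L : ℕ) (v : Site) (j : ℕ) : (boxSite L v · j).Injective :=
  fun i i' h => by simpa [boxSite] using congrArg Prod.fst h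

lemma boxSite_injective_right (L : ℕ) (v : Site) (i : ℕ) : (boxSite L v i ·).Injective :=
  fun j j' h => by simpa [boxSite] using congrArg Prod.snd h

lemma box_child_subset (n : ℕ) (v : Site) (a : Cell) : box n (child v a) ⊆ box (3 * n) v := by
  rintro y ⟨h1, h2, h3, h4⟩
  have ha1 : (n : ℤ) * a.1 ≤ n * 2 := by gcongr; omega
  have ha2 : (n : ℤ) * a.2 ≤ n * 2 := by gcongr; omega
  simp only [box, child, Set.mem_ofPred_eq] at *
  push_cast
  refine ⟨?_, ?_, ?_, ?_⟩ <;> nlinarith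

lemma eq_of_mem_Ico_mul {n a b y : ℤ} (hn : 0 < n) (ha : y ∈ Set.Ico (n * a) (n * a + n))
    (hb : y ∈ Set.Ico (n * b) (n * b + n)) : a = b := by
  obtain ⟨ha₁, ha₂⟩ := ha
  obtain ⟨hb₁, hb₂⟩ := hb
  rcases lt_trichotomy a b with h | h | h
  · nlinarith
  · exact h
  · nlinarith

lemma disjoint_box {n : ℕ} (hn : 0 < n) {v v' : Site} (h : v ≠ v') :
    Disjoint (box n v) (box n v') := by
  refine Set.disjoint_left.2 fun y ⟨h1, h2, h3, h4⟩ ⟨h1', h2', h3', h4'⟩ => h (Prod.ext ?_ ?_)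
  · exact eq_of_mem_Ico_mul (by omega) ⟨h1, h2⟩ ⟨h1', h2'⟩
  · exact eq_of_mem_Ico_mul (by omega) ⟨h3, h4⟩ ⟨h3', h4'⟩

lemma not_goodBox_subset (L : ℕ) (v : Site) :
    {s | ¬GoodBox L s v} ⊆
      (⋃ p ∈ Finset.range L ×ˢ Finset.range L, {s | (s (boxSite L v p.1 p.2)).1 = false}) ∪
      (⋃ j ∈ Finset.range L,
        {s | ∀ x ∈ (Finset.range L).image (boxSite L v · j), (s x).2 = false}) ∪
      (⋃ i ∈ Finset.range L,
        {s | ∀ x ∈ (Finset.range L).image (boxSite L v i ·), (s x).2 = false}) := by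
  intro s hs
  by_contra hmem
  simp only [Set.mem_union, Set.mem_iUnion, Set.mem_ofPred_eq, Finset.mem_product,
    Finset.mem_range, Finset.mem_image, forall_exists_index, and_imp, forall_apply_eq_imp_iff₂,
    Bool.not_eq_false, not_or, not_exists, not_forall, Prod.forall] at hmem
  obtain ⟨⟨hsusc, hrow⟩, hcol⟩ := hmem
  refine hs ⟨fun y hy => ?_, fun j hj => ?_, fun i hi => ?_⟩
  · obtain ⟨i, hi, j, hj, rfl⟩ := exists_boxSite_eq_of_mem_box hy
    exact hsusc i j hi hj
  · obtain ⟨i, hi, h⟩ := hrow j hj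
    exact ⟨i, hi, hsusc i j hi hj, h⟩
  · obtain ⟨j, hj, h⟩ := hcol i hi
    exact ⟨j, hj, hsusc i j hi hj, h⟩

def coord (i : Site ⊕ Site) (s : EnvCfg) : Bool :=
  Sum.elim (fun x => (s x).1) (fun x => (s x).2) i

abbrev sitesSigma (S : Set Site) : MeasurableSpace EnvCfg :=
  ⨆ i ∈ Sum.elim id id ⁻¹' S, MeasurableSpace.comap (coord i) inferInstance

lemma measurable_coord (i : Site ⊕ Site) : Measurable (coord i) := by
  cases i with
  | inl x => exact measurable_fst.comp (measurable_pi_apply x)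
  | inr x => exact measurable_snd.comp (measurable_pi_apply x)

lemma sitesSigma_le (S : Set Site) : sitesSigma S ≤ (inferInstance : MeasurableSpace EnvCfg) :=
  iSup₂_le fun i _ => (measurable_coord i).comap_le

lemma sitesSigma_mono {S T : Set Site} (h : S ⊆ T) : sitesSigma S ≤ sitesSigma T :=
  biSup_mono fun _ hi => h hi

lemma measurable_coord_eq {S : Set Site} {i : Site ⊕ Site} (hi : Sum.elim id id i ∈ S)
    (b : Bool) : Measurable[sitesSigma S] fun s => coord i s = b :=
  let := sitesSigma S
  measurableSet_setOfPred.1 <| Measurable.of_comap_le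
    (le_iSup₂ (f := fun i _ => MeasurableSpace.comap (coord i) inferInstance) i hi)
    (measurableSet_singleton b)

lemma measureReal_inter_of_disjoint {P : Measure EnvCfg} (hind : iIndepFun coord P)
    {S T : Set Site} (hST : Disjoint S T) {A B : Set EnvCfg}
    (hA : MeasurableSet[sitesSigma S] A) (hB : MeasurableSet[sitesSigma T] B) :
    P.real (A ∩ B) = P.real A * P.real B := by
  have := indep_iSup_of_disjoint (fun i => (measurable_coord i).comap_le) hind
    (hST.preimage (Sum.elim id id))
  simp only [measureReal_def, (Indep_iff _ _ _).1 this A B hA hB, ENNReal.toReal_mul]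

lemma measurable_goodBox (L : ℕ) (v : Site) :
    Measurable[sitesSigma (box L v)] fun s => GoodBox L s v := by
  let := sitesSigma (box L v)
  have hinfct {i j : ℕ} (hi : i < L) (hj : j < L) : Measurable[sitesSigma (box L v)]
      fun s => Infct s ((L : ℤ) * v.1 + i, (L : ℤ) * v.2 + j) :=
    (measurable_coord_eq (i := .inl _) (boxSite_mem_box hi hj) true).and
      (measurable_coord_eq (i := .inr _) (boxSite_mem_box hi hj) true)
  refine .and (.forall fun y => ?_) (.and (.forall fun j => ?_) (.forall fun i => ?_))
  · by_cases hy : y ∈ box L v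
    · simpa [hy, Susc, coord] using measurable_coord_eq (i := .inl y) hy true
    · simp [hy]
  · by_cases hj : j < L
    · simpa [hj] using Measurable.exists fun i => by
        by_cases hi : i < L
        · simpa [hi] using hinfct hi hj
        · simp [hi]
    · simp [hj]
  · by_cases hi : i < L
    · simpa [hi] using Measurable.exists fun j => by
        by_cases hj : j < L
        · simpa [hj] using hinfct hi hj
        · simp [hj]
    · simp [hi]

lemma measurable_blockGood (L : ℕ) :
    ∀ m v, Measurable[sitesSigma (box (3 ^ m * L) v)] fun s => BlockGood (GoodBox L s) m v
  | 0, v => by rw [pow_zero, one_mul]; exact measurable_goodBox L v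
  | m + 1, v => by
    let := sitesSigma (box (3 ^ (m + 1) * L) v)
    have hchild (a : Cell) : Measurable fun s => BlockGood (GoodBox L s) m (child v a) :=
      (measurable_blockGood L m (child v a)).mono
        (sitesSigma_mono (by simpa [pow_succ', mul_assoc] using box_child_subset _ v a)) le_rfl
    exact .forall fun a => (hchild a).not.imp (.forall fun b => (hchild b).not.imp measurable_const)

lemma measurableSet_not_blockGood (L m : ℕ) (v : Site) :
    MeasurableSet[sitesSigma (box (3 ^ m * L) v)] {s | ¬BlockGood (GoodBox L s) m v} :=
  let := sitesSigma (box (3 ^ m * L) v)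
  (measurable_blockGood L m v).not.setOf

section Probability

variable {P : Measure EnvCfg} [IsProbabilityMeasure P]

lemma measureReal_forall_coin_false (hind : iIndepFun coord P) {q : ℝ}
    (hq : ∀ x : Site, P.real {s | (s x).2 = true} = q) (T : Finset Site) :
    P.real {s | ∀ x ∈ T, (s x).2 = false} = (1 - q) ^ T.card := by
  have hfalse (x : Site) : P.real (coord (.inr x) ⁻¹' {false}) = 1 - q := by
    have hcompl : coord (.inr x) ⁻¹' {false} = {s | (s x).2 = true}ᶜ := by ext; simp [coord]
    rw [hcompl, probReal_compl_eq_one_sub (s := {t : EnvCfg | (t x).2 = true})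
      (measurable_coord (.inr x) (measurableSet_singleton _)), hq]
  have hprod := hind.meas_biInter (S := T.map .inr) (s := fun i => coord i ⁻¹' {false})
    fun i _ => ⟨{false}, measurableSet_singleton _, rfl⟩
  calc P.real {s | ∀ x ∈ T, (s x).2 = false}
      = P.real (⋂ i ∈ T.map .inr, coord i ⁻¹' {false}) := by
        congr 1
        ext s
        simp only [Set.mem_ofPred_eq, Set.mem_iInter, Finset.mem_map, Function.Embedding.inr_apply,
          forall_exists_index, and_imp, Set.mem_preimage, Set.mem_singleton_iff]
        exact ⟨fun h _ x hx hi => hi ▸ h x hx, fun h x hx => h _ x hx rfl⟩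
    _ = ∏ i ∈ T.map .inr, P.real (coord i ⁻¹' {false}) := by
        simp only [measureReal_def, hprod, ENNReal.toReal_prod]
    _ = (1 - q) ^ T.card := by simp [hfalse]

lemma measureReal_not_goodBox_le (hind : iIndepFun coord P) {q π : ℝ}
    (hπ : ∀ x : Site, P.real {s | (s x).1 = false} = π)
    (hq : ∀ x : Site, P.real {s | (s x).2 = true} = q) (L : ℕ) (v : Site) :
    P.real {s | ¬GoodBox L s v} ≤ L ^ 2 * π + 2 * L * (1 - q) ^ L := by
  have hline {f : ℕ → Site} (hf : f.Injective) :
      P.real {s | ∀ x ∈ (Finset.range L).image f, (s x).2 = false} = (1 - q) ^ L := by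
    rw [measureReal_forall_coin_false hind hq, Finset.card_image_of_injective _ hf,
      Finset.card_range]
  calc P.real {s | ¬GoodBox L s v}
      ≤ P.real (⋃ p ∈ Finset.range L ×ˢ Finset.range L, {s | (s (boxSite L v p.1 p.2)).1 = false})
        + P.real (⋃ j ∈ Finset.range L,
          {s | ∀ x ∈ (Finset.range L).image (boxSite L v · j), (s x).2 = false})
        + P.real (⋃ i ∈ Finset.range L,
          {s | ∀ x ∈ (Finset.range L).image (boxSite L v i ·), (s x).2 = false}) :=
        (measureReal_mono (not_goodBox_subset L v)).trans
          ((measureReal_union_le _ _).trans (by gcongr; exact measureReal_union_le _ _))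
    _ ≤ ∑ _p ∈ Finset.range L ×ˢ Finset.range L, π + ∑ _j ∈ Finset.range L, (1 - q) ^ L
        + ∑ _i ∈ Finset.range L, (1 - q) ^ L := by
        gcongr
        · exact (measureReal_biUnion_finset_le _ _).trans_eq (Finset.sum_congr rfl fun _ _ => hπ _)
        · exact (measureReal_biUnion_finset_le _ _).trans_eq
            (Finset.sum_congr rfl fun j _ => hline (boxSite_injective_left L v j))
        · exact (measureReal_biUnion_finset_le _ _).trans_eq
            (Finset.sum_congr rfl fun i _ => hline (boxSite_injective_right L v i))
    _ = L ^ 2 * π + 2 * L * (1 - q) ^ L := by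
        simp only [Finset.sum_const, Finset.card_product, Finset.card_range, nsmul_eq_mul,
          Nat.cast_mul]
        ring

/-- Two bad children are disjoint boxes, so at each level the bad probability is squared; the
factor `72` counts ordered pairs of distinct children. -/
lemma measureReal_not_blockGood_le (hind : iIndepFun coord P) {L : ℕ} (hL : 0 < L) {b : ℝ}
    (hb : 144 * b ≤ 1) (hbase : ∀ v, P.real {s | ¬GoodBox L s v} ≤ b) (m : ℕ) (v : Site) :
    P.real {s | ¬BlockGood (GoodBox L s) m v} ≤ b / 2 ^ m := by
  induction m generalizing v with
  | zero => simpa [BlockGood] using hbase v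
  | succ m ih =>
    have hb0 : 0 ≤ b := measureReal_nonneg.trans (hbase v)
    let E (w : Site) := {s | ¬BlockGood (GoodBox L s) m w}
    have hsub : {s | ¬BlockGood (GoodBox L s) (m + 1) v} ⊆
        ⋃ p ∈ (Finset.univ : Finset Cell).offDiag, E (child v p.1) ∩ E (child v p.2) := by
      intro s hs
      obtain ⟨a, ha, a', ha', hne⟩ := Set.not_subsingleton_iff.1 hs
      exact Set.mem_biUnion (x := (a, a'))
        (Finset.mem_offDiag.2 ⟨Finset.mem_univ a, Finset.mem_univ a', hne⟩) ⟨ha, ha'⟩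
    have hpair (p : Cell × Cell) (hp : p ∈ (Finset.univ : Finset Cell).offDiag) :
        P.real (E (child v p.1) ∩ E (child v p.2)) ≤ (b / 2 ^ m) ^ 2 := by
      have hdisj := disjoint_box (n := 3 ^ m * L) (by positivity)
        ((child_injective v).ne (Finset.mem_offDiag.1 hp).2.2)
      rw [measureReal_inter_of_disjoint hind hdisj (measurableSet_not_blockGood L m _)
        (measurableSet_not_blockGood L m _), sq]
      exact mul_le_mul (ih _) (ih _) measureReal_nonneg (by positivity)
    calc P.real {s | ¬BlockGood (GoodBox L s) (m + 1) v}
        ≤ ∑ p ∈ (Finset.univ : Finset Cell).offDiag, P.real (E (child v p.1) ∩ E (child v p.2)) :=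
          (measureReal_mono hsub (measure_ne_top P _)).trans (measureReal_biUnion_finset_le _ _)
      _ ≤ ∑ _p ∈ (Finset.univ : Finset Cell).offDiag, (b / 2 ^ m) ^ 2 := Finset.sum_le_sum hpair
      _ = b / 2 ^ (m + 1) * (144 * b / 2 ^ m) := by
          simp only [Finset.sum_const, Finset.offDiag_card, Finset.card_univ, Fintype.card_prod,
            Fintype.card_fin, Nat.reduceMul, Nat.reduceSub, nsmul_eq_mul, Nat.cast_ofNat]
          ring
      _ ≤ b / 2 ^ (m + 1) * 1 := by
          gcongr
          exact div_le_one_of_le₀ (hb.trans (one_le_pow₀ one_le_two)) (by positivity)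
      _ = b / 2 ^ (m + 1) := mul_one _

lemma le_measureReal_originInInfiniteGoodCluster (hind : iIndepFun coord P) {L : ℕ} (hL : 0 < L)
    {b : ℝ} (hb : 144 * b ≤ 1) (hbase : ∀ v, P.real {s | ¬GoodBox L s v} ≤ b) :
    1 - 2 * b ≤ P.real {s | OriginInInfiniteGoodCluster L s} := by
  have hb0 : 0 ≤ b := measureReal_nonneg.trans (hbase 0)
  set bad := ⋃ m, {s | ¬BlockGood (GoodBox L s) m (0, 0)}
  have hmeas : MeasurableSet bad :=
    .iUnion fun m => sitesSigma_le _ _ (measurableSet_not_blockGood L m _)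
  have hbad : P.real bad ≤ 2 * b := by
    refine ENNReal.toReal_le_of_le_ofReal (by positivity) ((measure_iUnion_le _).trans ?_)
    rw [← tsum_geometric_two' (2 * b), ENNReal.ofReal_tsum_of_nonneg (fun _ => by positivity)
      (summable_geometric_two' _)]
    refine ENNReal.tsum_le_tsum fun m => ?_
    rw [← ofReal_measureReal, show 2 * b / 2 / 2 ^ m = b / 2 ^ m by ring]
    exact ENNReal.ofReal_le_ofReal (measureReal_not_blockGood_le hind hL hb hbase m _)
  have hsub : badᶜ ⊆ {s | OriginInInfiniteGoodCluster L s} := fun s hs =>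
    exists_infinite_cluster (by simpa [bad] using hs)
  calc 1 - 2 * b ≤ 1 - P.real bad := by linarith
    _ = P.real badᶜ := (probReal_compl_eq_one_sub hmeas).symm
    _ ≤ P.real {s | OriginInInfiniteGoodCluster L s} := measureReal_mono hsub

end Probability

lemma floor_rpow_sq_mul_le {q π ε : ℝ} (hq : 0 < q) (hπ0 : 0 ≤ π) (hπ : π ≤ q ^ (2 + ε)) :
    (⌊q ^ (-(1 + ε / 3))⌋₊ : ℝ) ^ 2 * π ≤ q ^ (ε / 3) :=
  calc (⌊q ^ (-(1 + ε / 3))⌋₊ : ℝ) ^ 2 * π ≤ (q ^ (-(1 + ε / 3))) ^ 2 * q ^ (2 + ε) := by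
        gcongr
        exact Nat.floor_le (by positivity)
    _ = q ^ (ε / 3) := by
        rw [← Real.rpow_natCast, ← Real.rpow_mul hq.le, ← Real.rpow_add hq]
        ring_nf

section Asymptotics

open Filter Topology Real

lemma tendsto_rpow_neg_mul_exp_neg_rpow_neg {δ : ℝ} (hδ : 0 < δ) (r : ℝ) :
    Tendsto (fun q : ℝ => q ^ (-r) * exp (-q ^ (-δ))) (𝓝[>] 0) (𝓝 0) := by
  refine ((tendsto_rpow_mul_exp_neg_mul_atTop_nhds_zero (r / δ) 1 one_pos).comp
    (tendsto_rpow_neg_nhdsGT_zero (neg_neg_of_pos hδ))).congr' ?_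
  filter_upwards [self_mem_nhdsWithin] with q (hq : 0 < q)
  simp only [Function.comp_apply, neg_mul, one_mul, ← rpow_mul hq.le]
  congr 2
  field_simp

lemma two_mul_floor_mul_one_sub_pow_le {q δ : ℝ} (hq : 0 < q) (hq1 : q < 1) :
    2 * (⌊q ^ (-(1 + δ))⌋₊ : ℝ) * (1 - q) ^ ⌊q ^ (-(1 + δ))⌋₊ ≤
      2 * q ^ (-(1 + δ)) * exp (1 - q ^ (-δ)) := by
  set L := ⌊q ^ (-(1 + δ))⌋₊
  have hL : (L : ℝ) ≤ q ^ (-(1 + δ)) := Nat.floor_le (by positivity)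
  have hqL : q ^ (-δ) - 1 ≤ q * L := by
    have hfloor := Nat.sub_one_lt_floor (q ^ (-(1 + δ)))
    have e : q ^ (-δ) = q * q ^ (-(1 + δ)) := by
      rw [show -δ = 1 + -(1 + δ) by ring, rpow_add hq, rpow_one]
    nlinarith
  have hpow : (1 - q) ^ L ≤ exp (1 - q ^ (-δ)) :=
    calc (1 - q) ^ L ≤ exp (-q) ^ L := pow_le_pow_left₀ (by linarith) (one_sub_le_exp_neg q) L
      _ = exp (-(q * L)) := by rw [← exp_nat_mul]; ring_nf
      _ ≤ exp (1 - q ^ (-δ)) := exp_le_exp.2 (by linarith)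
  gcongr

lemma eventually_scale_bounds {δ : ℝ} (hδ : 0 < δ) :
    ∀ᶠ q in 𝓝[>] (0 : ℝ), q < 1 ∧ 288 * q ^ δ ≤ 1 ∧
      2 * (⌊q ^ (-(1 + δ))⌋₊ : ℝ) * (1 - q) ^ ⌊q ^ (-(1 + δ))⌋₊ ≤ q ^ δ := by
  have hpow : Tendsto (fun q : ℝ => q ^ δ) (𝓝[>] 0) (𝓝 0) := by
    simpa [zero_rpow hδ.ne'] using
      (continuousAt_rpow_const 0 δ (.inr hδ.le)).tendsto.mono_left nhdsWithin_le_nhds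
  filter_upwards [Ioo_mem_nhdsGT one_pos, hpow.eventually_le_const (u := 1 / 288) (by norm_num),
    (tendsto_rpow_neg_mul_exp_neg_rpow_neg hδ (1 + 2 * δ)).eventually_le_const
      (u := 1 / (2 * exp 1)) (by positivity)] with q ⟨hq, hq1⟩ h288 hexp
  refine ⟨hq1, by linarith, (two_mul_floor_mul_one_sub_pow_le hq hq1).trans ?_⟩
  calc 2 * q ^ (-(1 + δ)) * exp (1 - q ^ (-δ))
      = 2 * exp 1 * (q ^ (-(1 + 2 * δ)) * exp (-q ^ (-δ))) * q ^ δ := by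
        rw [sub_eq_add_neg, exp_add, show -(1 + δ) = -(1 + 2 * δ) + δ by ring, rpow_add hq]
        ring
    _ ≤ 2 * exp 1 * (1 / (2 * exp 1)) * q ^ δ := by gcongr
    _ = q ^ δ := by field_simp

end Asymptotics

theorem origin_in_infinite_good_cluster (ε : ℝ) (hε : 0 < ε) :
    ∃ q₀ : ℝ, 0 < q₀ ∧ ∀ q : ℝ, 0 < q → q < q₀ → ∀ π : ℝ, 0 < π → π < q ^ (2 + ε) →
    ∀ P : Measure EnvCfg, IsProbabilityMeasure P →
    iIndepFun (β := fun _ : Site ⊕ Site => Bool)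
      (fun i s => Sum.elim (fun x => (s x).1) (fun x => (s x).2) i) P →
    (∀ x : Site, (P {s | (s x).1 = false}).toReal = π) →
    (∀ x : Site, (P {s | (s x).2 = true}).toReal = q) →
    1 - 16 * q ^ (ε / 3) ≤
      (P {s | OriginInInfiniteGoodCluster (⌊q ^ (-(1 + ε / 3))⌋₊) s}).toReal := by
  obtain ⟨q₀, hq₀, hsmall⟩ :=
    mem_nhdsGT_iff_exists_Ioo_subset.1 (eventually_scale_bounds (by positivity : 0 < ε / 3))
  refine ⟨q₀, hq₀, fun q hq hqq₀ π hπ hπq P hP hind hπeq hqeq => ?_⟩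
  obtain ⟨hq1, h288, hlines⟩ := hsmall ⟨hq, hqq₀⟩
  have hL : 0 < ⌊q ^ (-(1 + ε / 3))⌋₊ := Nat.floor_pos.2 <|
    Real.one_le_rpow_of_pos_of_le_one_of_nonpos hq hq1.le (neg_nonpos.2 (by positivity))
  have hbase (v : Site) : P.real {s | ¬GoodBox _ s v} ≤ 2 * q ^ (ε / 3) :=
    (measureReal_not_goodBox_le hind hπeq hqeq _ v).trans
      ((add_le_add (floor_rpow_sq_mul_le hq hπ.le hπq.le) hlines).trans_eq (two_mul _).symm)
  refine le_trans ?_ (le_measureReal_originInInfiniteGoodCluster hind hL (by linarith) hbase)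
  linarith [Real.rpow_nonneg hq.le (ε / 3)]
end
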